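/- arXiv:2009.13254 — 2 statements merged into one kernel-verified Lean document; each statement's English description precedes it below -/
import Mathlib

section
/- For all real numbers s > 0, the quadratic polynomial P(s;u) = u^2 - (s+1+ρ+q)u + sq + ρ + q has two distinct real roots U⁻(s) and U⁺(s) satisfying q < U⁻(s) < 1 < U⁺(s). -/
/-- The roots are `(b ∓ √(b² - 4c)) / 2`. -/
theorem exists_roots_of_quadratic_pos_neg {b c x y : ℝ} (hxy : x < y)
    (hx : 0 < x ^ 2 - b * x + c) (hy : y ^ 2 - b * y + c < 0) :
    ∃ u v : ℝ, u ^ 2 - b * u + c = 0 ∧ v ^ 2 - b * v + c = 0 ∧ x < u ∧ u < y ∧ y < v := by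
  set r := Real.sqrt (b ^ 2 - 4 * c)
  have hr2 : r ^ 2 = b ^ 2 - 4 * c := Real.sq_sqrt (by nlinarith [sq_nonneg (2 * y - b)])
  have hr : 0 ≤ r := Real.sqrt_nonneg _
  have hyr : |2 * y - b| < r := abs_lt_of_sq_lt_sq (by linarith) hr
  have hxr : |r| < |2 * x - b| := sq_lt_sq.1 (by linarith)
  rw [abs_of_nonneg hr] at hxr
  obtain ⟨hyr₁, hyr₂⟩ := abs_lt.1 hyr
  have hxr' : 2 * x - b < -r := by
    rcases lt_abs.1 hxr with h | h <;> linarith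
  exact ⟨(b - r) / 2, (b + r) / 2, by linear_combination hr2 / 4, by linear_combination hr2 / 4,
    by linarith, by linarith, by linarith⟩

theorem stmt0_general (ρ q : ℝ) (hρ : 0 < ρ) (hq : q ∈ Set.Ioo (0:ℝ) 1) :
    ∀ s : ℝ, 0 < s → ∃ Um Up : ℝ,
      Um ^ 2 - (s + 1 + ρ + q) * Um + s * q + ρ + q = 0 ∧
      Up ^ 2 - (s + 1 + ρ + q) * Up + s * q + ρ + q = 0 ∧
      q < Um ∧ Um < 1 ∧ 1 < Up := by
  intro s hs
  -- `P(s; q) = ρ (1 - q)` and `P(s; 1) = -s (1 - q)`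
  have hPq : 0 < q ^ 2 - (s + 1 + ρ + q) * q + (s * q + ρ + q) := by
    linear_combination mul_pos hρ (sub_pos.2 hq.2)
  have hP1 : (1 : ℝ) ^ 2 - (s + 1 + ρ + q) * 1 + (s * q + ρ + q) < 0 := by
    linear_combination mul_pos hs (sub_pos.2 hq.2)
  obtain ⟨Um, Up, hUm, hUp, h⟩ := exists_roots_of_quadratic_pos_neg hq.2 hPq hP1
  exact ⟨Um, Up, by linear_combination hUm, by linear_combination hUp, h⟩

theorem stmt0 (ρ q : ℝ) (hρ : 0 < ρ) (hq : q ∈ Set.Ioo (0:ℝ) 1)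
    (hstab : 0 < 1 - ρ - q) :
    ∀ s : ℝ, 0 < s → ∃ Um Up : ℝ,
      Um ^ 2 - (s + 1 + ρ + q) * Um + s * q + ρ + q = 0 ∧
      Up ^ 2 - (s + 1 + ρ + q) * Up + s * q + ρ + q = 0 ∧
      q < Um ∧ Um < 1 ∧ 1 < Up :=
  stmt0_general ρ q hρ hq
end

section
/- Suppose for each n ≥ 0 and b ≥ 1 the real numbers e*_{n,b}(s) ∈ [0,1] satisfy the recurrence (s+ρ+1)(n+b) e*_{n,b} = (b e*_{n,b-1} 1_{b≥2} + 1_{b=1}) + n e*_{n-1,b} + ρ(n+b)(1-q) ∑_{m≥1} q^{m-1} e*_{n+m,b}, with e*_{-1,b} = 0. Then the generating functions E_b(u) = ∑_{n≥0} e*_{n,b}(s) u^n (absolutely convergent for |u| < 1) satisfy, for b = 1 and u ∈ (q,1): (u P(u)/(u-q)) E₁'(u) + (u - (1+ρ+s)) E₁(u) + ρ(1-q)(E₁(u) - E₁(q))/(u-q) - uρ(1-q)(E₁(u) - E₁(q))/(u-q)² + 1/(1-u) = 0, where P(u) = u² - (s+1+ρ+q)u + sq + ρ + q. -/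
/-!
Multiplying the `b = 1` recurrence by `uⁿ` and summing over `n` gives
`(s + ρ + 1 - u) (u E₁)' = 1 / (1 - u) + ρ (1 - q) (u D)'`, where `D(u) = ∑ₙ Tₙ uⁿ` is the
generating function of the tail sums `Tₙ = ∑ₘ qᵐ e_{n+m+1}`. The recursion
`Tₙ = e_{n+1} + q T_{n+1}` telescopes to `(u - q) D(u) = E₁(u) - E₁(q)`; differentiating this
identity expresses `D'` through `E₁'`, and eliminating `D` and `D'` leaves the claimed equation.
All coefficients involved grow at most linearly, so every series converges and may be
differentiated termwise on `|u| < 1`.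
-/

section BoundedCoefficients

variable {a : ℕ → ℝ} {C x : ℝ}

lemma summable_mul_pow_of_abs_le_mul_succ (ha : ∀ n, |a n| ≤ C * (n + 1)) (hx : |x| < 1) :
    Summable fun n => a n * x ^ n := by
  have hx' : ‖|x|‖ < 1 := by rwa [Real.norm_eq_abs, abs_abs]
  have hg : Summable fun n : ℕ => C * (((n : ℝ) + 1) * |x| ^ n) := by
    refine Summable.mul_left C ?_
    simpa [add_mul] using (summable_pow_mul_geometric_of_norm_lt_one 1 hx').add
      (summable_geometric_of_lt_one (abs_nonneg x) hx)
  refine hg.of_norm_bounded fun n => ?_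
  rw [Real.norm_eq_abs, abs_mul, abs_pow, ← mul_assoc]
  exact mul_le_mul_of_nonneg_right (ha n) (by positivity)

variable (ha : ∀ n, |a n| ≤ C) (hx : |x| < 1)
include ha hx

lemma summable_mul_pow_of_abs_le : Summable fun n => a n * x ^ n :=
  have hC : 0 ≤ C := (abs_nonneg _).trans (ha 0)
  summable_mul_pow_of_abs_le_mul_succ
    (fun n => (ha n).trans (le_mul_of_one_le_right hC (by linarith [n.cast_nonneg (α := ℝ)]))) hx

lemma summable_succ_mul_mul_pow : Summable fun n : ℕ => ((n : ℝ) + 1) * a n * x ^ n :=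
  summable_mul_pow_of_abs_le_mul_succ (C := C) (fun n => by
    rw [abs_mul, abs_of_nonneg (by positivity), mul_comm]
    exact mul_le_mul_of_nonneg_right (ha n) (by positivity)) hx

lemma summable_mul_nat_mul_pow_pred : Summable fun n : ℕ => a n * (n * x ^ (n - 1)) := by
  rw [← summable_nat_add_iff 1]
  refine (summable_succ_mul_mul_pow (a := fun n => a (n + 1)) (fun n => ha _) hx).congr
    fun n => ?_
  push_cast
  ring

lemma hasDerivAt_tsum_mul_pow :
    HasDerivAt (fun y => ∑' n, a n * y ^ n) (∑' n : ℕ, a n * (n * x ^ (n - 1))) x := by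
  obtain ⟨r, hxr, hr1⟩ := exists_between hx
  have hr0 : 0 ≤ r := (abs_nonneg x).trans hxr.le
  have hr : |r| < 1 := by rwa [abs_of_nonneg hr0]
  refine hasDerivAt_tsum_of_isPreconnected (summable_mul_nat_mul_pow_pred
    (a := fun _ => C) (fun _ => le_rfl) hr) Metric.isOpen_ball
    (convex_ball (0 : ℝ) r).isPreconnected (fun n y _ => (hasDerivAt_pow n y).const_mul (a n))
    (fun n y hy => ?_) (Metric.mem_ball_self ((abs_nonneg x).trans_lt hxr))
    (summable_mul_pow_of_abs_le ha (by simp)) (by simpa using hxr)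
  rw [mem_ball_zero_iff, Real.norm_eq_abs] at hy
  rw [Real.norm_eq_abs, abs_mul, abs_mul, Nat.abs_cast, abs_pow]
  gcongr
  exacts [(abs_nonneg _).trans (ha 0), ha n]

lemma tsum_succ_mul_mul_pow :
    ∑' n : ℕ, ((n : ℝ) + 1) * a n * x ^ n =
      ∑' n, a n * x ^ n + x * ∑' n : ℕ, a n * (n * x ^ (n - 1)) := by
  rw [← tsum_mul_left, ← (summable_mul_pow_of_abs_le ha hx).tsum_add
    ((summable_mul_nat_mul_pow_pred ha hx).mul_left x)]
  refine tsum_congr fun n => ?_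
  rcases n with _ | n
  · simp
  · push_cast [Nat.add_sub_cancel]; ring

end BoundedCoefficients

noncomputable def tailSum (q : ℝ) (a : ℕ → ℝ) (n : ℕ) : ℝ := ∑' m : ℕ, q ^ m * a (n + m + 1)

section TailSum

variable {a : ℕ → ℝ} {C q : ℝ} (ha : ∀ n, |a n| ≤ C) (hq0 : 0 ≤ q) (hq1 : q < 1)
include ha hq0 hq1

lemma summable_pow_mul_shift (n : ℕ) : Summable fun m : ℕ => q ^ m * a (n + m + 1) :=
  (summable_mul_pow_of_abs_le (fun m => ha (n + m + 1)) (by rwa [abs_of_nonneg hq0])).congr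
    fun m => mul_comm _ _

lemma abs_tailSum_le (n : ℕ) : |tailSum q a n| ≤ C * (1 - q)⁻¹ := by
  rw [← Real.norm_eq_abs, tailSum]
  exact tsum_of_norm_bounded ((hasSum_geometric_of_lt_one hq0 hq1).mul_left C) fun m => by
    rw [Real.norm_eq_abs, abs_mul, abs_pow, abs_of_nonneg hq0, mul_comm C]
    exact mul_le_mul_of_nonneg_left (ha _) (by positivity)

lemma tailSum_eq_add_mul_tailSum_succ (n : ℕ) :
    tailSum q a n = a (n + 1) + q * tailSum q a (n + 1) := by
  rw [tailSum, (summable_pow_mul_shift ha hq0 hq1 n).tsum_eq_zero_add, tailSum, ← tsum_mul_left]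
  simp only [pow_zero, one_mul, add_zero, pow_succ]
  congr 1
  exact tsum_congr fun m => by ring_nf

lemma add_mul_tailSum_zero : a 0 + q * tailSum q a 0 = ∑' n, a n * q ^ n := by
  rw [(summable_mul_pow_of_abs_le ha (by rwa [abs_of_nonneg hq0])).tsum_eq_zero_add, tailSum,
    ← tsum_mul_left]
  simp only [pow_zero, mul_one, pow_succ]
  congr 1
  exact tsum_congr fun m => by ring_nf

lemma sub_mul_tsum_tailSum_mul_pow {x : ℝ} (hx : |x| < 1) :
    (x - q) * ∑' n, tailSum q a n * x ^ n = ∑' n, a n * x ^ n - ∑' n, a n * q ^ n := by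
  have hT := summable_mul_pow_of_abs_le (abs_tailSum_le ha hq0 hq1) hx
  have hE := summable_mul_pow_of_abs_le ha hx
  have hshift : x * ∑' n, tailSum q a n * x ^ n =
      ∑' n, a (n + 1) * x ^ (n + 1) + q * ∑' n, tailSum q a (n + 1) * x ^ (n + 1) := by
    rw [← tsum_mul_left, ← tsum_mul_left, ← ((summable_nat_add_iff 1).2 hE).tsum_add
      (((summable_nat_add_iff 1).2 hT).mul_left q)]
    exact tsum_congr fun n => by rw [tailSum_eq_add_mul_tailSum_succ ha hq0 hq1]; ring
  have hE0 := hE.tsum_eq_zero_add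
  have hT0 := hT.tsum_eq_zero_add
  simp only [pow_zero, mul_one] at hE0 hT0
  linear_combination hshift - q * hT0 - hE0 - add_mul_tailSum_zero ha hq0 hq1

end TailSum

section TailSumDeriv

variable {a : ℕ → ℝ} {C q x : ℝ} (ha : ∀ n, |a n| ≤ C) (hq0 : 0 ≤ q) (hq1 : q < 1)
  (hx : |x| < 1)
include ha hq0 hq1 hx

lemma tsum_tailSum_add_sub_mul_deriv :
    ∑' n, tailSum q a n * x ^ n + (x - q) * ∑' n : ℕ, tailSum q a n * (n * x ^ (n - 1)) =
      ∑' n : ℕ, a n * (n * x ^ (n - 1)) := by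
  have hT := abs_tailSum_le ha hq0 hq1
  have hball : Metric.ball (0 : ℝ) 1 ∈ nhds x :=
    Metric.isOpen_ball.mem_nhds (by simpa using hx)
  have heq : (fun y => (y - q) * ∑' n, tailSum q a n * y ^ n) =ᶠ[nhds x]
      fun y => ∑' n, a n * y ^ n - ∑' n, a n * q ^ n := by
    filter_upwards [hball] with y hy
    exact sub_mul_tsum_tailSum_mul_pow ha hq0 hq1 (by simpa using hy)
  have hprod := ((hasDerivAt_id x).sub_const q).mul (hasDerivAt_tsum_mul_pow hT hx)
  have := (hprod.congr_of_eventuallyEq heq.symm).unique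
    ((hasDerivAt_tsum_mul_pow ha hx).sub_const _)
  simpa using this

end TailSumDeriv

lemma tsum_nat_mul_ite_pred_mul_pow {a : ℕ → ℝ} {x : ℝ}
    (ha : Summable fun n : ℕ => ((n : ℝ) + 1) * a n * x ^ n) :
    ∑' n : ℕ, (n : ℝ) * (if n = 0 then 0 else a (n - 1)) * x ^ n =
      x * ∑' n : ℕ, ((n : ℝ) + 1) * a n * x ^ n := by
  have hshift : ∀ n : ℕ, ((n + 1 : ℕ) : ℝ) * (if n + 1 = 0 then 0 else a (n + 1 - 1)) *
      x ^ (n + 1) = x * (((n : ℝ) + 1) * a n * x ^ n) := fun n => by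
    simp only [Nat.add_eq_zero_iff, one_ne_zero, and_false, if_false, Nat.add_sub_cancel]
    push_cast; ring
  rw [tsum_eq_zero_add' ((ha.mul_left x).congr fun n => (hshift n).symm), tsum_congr hshift,
    tsum_mul_left]
  simp

lemma tsum_succ_mul_mul_pow_of_recurrence {a : ℕ → ℝ} {C c κ q x : ℝ} (ha : ∀ n, |a n| ≤ C)
    (hq0 : 0 ≤ q) (hq1 : q < 1) (hx : |x| < 1)
    (hrec : ∀ n : ℕ, c * ((n : ℝ) + 1) * a n =
      1 + n * (if n = 0 then 0 else a (n - 1)) + κ * ((n : ℝ) + 1) * tailSum q a n) :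
    c * ∑' n : ℕ, ((n : ℝ) + 1) * a n * x ^ n =
      (1 - x)⁻¹ + x * ∑' n : ℕ, ((n : ℝ) + 1) * a n * x ^ n
        + κ * ∑' n : ℕ, ((n : ℝ) + 1) * tailSum q a n * x ^ n := by
  have hA := summable_succ_mul_mul_pow ha hx
  have hT := summable_succ_mul_mul_pow (abs_tailSum_le ha hq0 hq1) hx
  have hG := summable_geometric_of_norm_lt_one (by rwa [Real.norm_eq_abs])
  have hP : Summable fun n : ℕ => (n : ℝ) * (if n = 0 then 0 else a (n - 1)) * x ^ n := by
    refine summable_mul_pow_of_abs_le_mul_succ (C := C) (fun n => ?_) hx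
    have hC : 0 ≤ C := (abs_nonneg _).trans (ha 0)
    split_ifs
    · rw [mul_zero, abs_zero]; positivity
    · rw [abs_mul, Nat.abs_cast, mul_comm]
      exact mul_le_mul (ha _) (by linarith) (by positivity) hC
  rw [← tsum_geometric_of_norm_lt_one (by rwa [Real.norm_eq_abs]),
    ← tsum_nat_mul_ite_pred_mul_pow hA, ← tsum_mul_left, ← tsum_mul_left,
    ← hG.tsum_add hP, ← (hG.add hP).tsum_add (hT.mul_left κ)]
  exact tsum_congr fun n => by linear_combination x ^ n * hrec n

theorem stmt8_general (s ρ q : ℝ) (hq : q ∈ Set.Ioo (0:ℝ) 1)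
    (e : ℕ → ℕ → ℝ)
    (hbound : ∀ n b : ℕ, 1 ≤ b → e n b ∈ Set.Icc (0:ℝ) 1)
    (hrec : ∀ n b : ℕ, 1 ≤ b →
      (s + ρ + 1) * ((n : ℝ) + b) * e n b =
        ((if 2 ≤ b then (b : ℝ) * e n (b - 1) else 0) + (if b = 1 then 1 else 0))
        + (n : ℝ) * (if n = 0 then 0 else e (n - 1) b)
        + ρ * ((n : ℝ) + b) * (1 - q) * ∑' m : ℕ, q ^ m * e (n + m + 1) b) :
    ∀ u ∈ Set.Ioo q 1,
      (u * (u ^ 2 - (s + 1 + ρ + q) * u + s * q + ρ + q) / (u - q)) *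
          deriv (fun x => ∑' n : ℕ, e n 1 * x ^ n) u
        + (u - (1 + ρ + s)) * (∑' n : ℕ, e n 1 * u ^ n)
        + ρ * (1 - q) * ((∑' n : ℕ, e n 1 * u ^ n) - (∑' n : ℕ, e n 1 * q ^ n)) / (u - q)
        - u * ρ * (1 - q) * ((∑' n : ℕ, e n 1 * u ^ n) - (∑' n : ℕ, e n 1 * q ^ n)) / (u - q) ^ 2
        + 1 / (1 - u) = 0 := by
  obtain ⟨hq0, hq1⟩ := hq
  rintro u ⟨hqu, hu1⟩
  have hu : |u| < 1 := abs_lt.2 ⟨by linarith, hu1⟩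
  have he : ∀ n, |e n 1| ≤ 1 := fun n =>
    abs_le.2 ⟨by linarith [(hbound n 1 le_rfl).1], (hbound n 1 le_rfl).2⟩
  have hrec₁ : ∀ n : ℕ, (s + ρ + 1) * ((n : ℝ) + 1) * e n 1 =
      1 + n * (if n = 0 then 0 else e (n - 1) 1)
        + ρ * (1 - q) * ((n : ℝ) + 1) * tailSum q (e · 1) n := fun n => by
    have := hrec n 1 le_rfl
    simp only [Nat.cast_one, Nat.not_succ_le_self, if_false, if_true, zero_add] at this
    rw [tailSum]
    linear_combination this
  have hgen := tsum_succ_mul_mul_pow_of_recurrence he hq0.le hq1 hu hrec₁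
  rw [tsum_succ_mul_mul_pow he hu,
    tsum_succ_mul_mul_pow (abs_tailSum_le he hq0.le hq1) hu] at hgen
  have hparts := sub_mul_tsum_tailSum_mul_pow he hq0.le hq1 hu
  have hderiv := tsum_tailSum_add_sub_mul_deriv he hq0.le hq1 hu
  rw [(hasDerivAt_tsum_mul_pow he hu).deriv]
  set E := ∑' n, e n 1 * u ^ n
  set E' := ∑' n : ℕ, e n 1 * (n * u ^ (n - 1))
  set D := ∑' n, tailSum q (e · 1) n * u ^ n
  set D' := ∑' n : ℕ, tailSum q (e · 1) n * (n * u ^ (n - 1))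
  have hinv : (1 - u) * (1 - u)⁻¹ = 1 := mul_inv_cancel₀ (sub_ne_zero.2 hu1.ne')
  have huq : u - q ≠ 0 := sub_ne_zero.2 hqu.ne'
  field_simp
  linear_combination (1 - u) * (-(u - q) ^ 2 * hgen + ρ * (1 - q) * q * hparts
    - ρ * (1 - q) * u * (u - q) * hderiv) - (u - q) ^ 2 * hinv

theorem stmt8 (s ρ q : ℝ) (hs : 0 < s) (hρ : 0 < ρ) (hq : q ∈ Set.Ioo (0:ℝ) 1)
    (hstab : ρ + q < 1) (e : ℕ → ℕ → ℝ)
    (hbound : ∀ n b : ℕ, 1 ≤ b → e n b ∈ Set.Icc (0:ℝ) 1)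
    (hrec : ∀ n b : ℕ, 1 ≤ b →
      (s + ρ + 1) * ((n : ℝ) + b) * e n b =
        ((if 2 ≤ b then (b : ℝ) * e n (b - 1) else 0) + (if b = 1 then 1 else 0))
        + (n : ℝ) * (if n = 0 then 0 else e (n - 1) b)
        + ρ * ((n : ℝ) + b) * (1 - q) * ∑' m : ℕ, q ^ m * e (n + m + 1) b) :
    ∀ u ∈ Set.Ioo q 1,
      (u * (u ^ 2 - (s + 1 + ρ + q) * u + s * q + ρ + q) / (u - q)) *
          deriv (fun x => ∑' n : ℕ, e n 1 * x ^ n) u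
        + (u - (1 + ρ + s)) * (∑' n : ℕ, e n 1 * u ^ n)
        + ρ * (1 - q) * ((∑' n : ℕ, e n 1 * u ^ n) - (∑' n : ℕ, e n 1 * q ^ n)) / (u - q)
        - u * ρ * (1 - q) * ((∑' n : ℕ, e n 1 * u ^ n) - (∑' n : ℕ, e n 1 * q ^ n)) / (u - q) ^ 2
        + 1 / (1 - u) = 0 :=
  stmt8_general s ρ q hq e hbound hrec
end
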